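/- Fix integers n ≥ 2, N ≥ 1 and m ≥ 1, an open connected set Ω ⊆ (Fin n → ℂ) on which the coordinate functions λ₁,…,λ_n are pairwise distinct, and differentiable functions A_j : Ω → Matrix (Fin N) (Fin N) ℂ satisfying the Schlesinger system on Ω: ∂A_j/∂λ_k = [A_j,A_k]/(λ_j−λ_k) for j ≠ k and ∂A_j/∂λ_j = −Σ_{k≠j}[A_j,A_k]/(λ_j−λ_k). Then for every j, the function x ↦ tr((A_j(x))^m) is constant on Ω (all its partial derivatives vanish identically). -/

import Mathlib

/-!
The Schlesinger system is in Lax form: each `∂A_j/∂λ_k` is a commutator `[A_j, B]`, with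
`B = A_k / (λ_j - λ_k)` for `k ≠ j` and `B = -∑_{l ≠ j} A_l / (λ_j - λ_l)` for `k = j`. Hence
`∂_k tr (A_j ^ m) = m tr (A_j ^ (m - 1) [A_j, B]) = 0` by cyclicity of the trace, and a function
whose partial derivatives vanish on a connected open set is constant there.
-/

attribute [local instance] Matrix.normedAddCommGroup Matrix.normedSpace

/-- Partial derivative (in the `k`-th coordinate) of a function of `n` complex variables. -/
noncomputable def pdv {n : ℕ} {E : Type*} [NormedAddCommGroup E] [NormedSpace ℂ E]
    (k : Fin n) (f : (Fin n → ℂ) → E) (x : Fin n → ℂ) : E :=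
  deriv (fun t : ℂ => f (Function.update x k t)) (x k)

namespace Matrix

variable {ι R : Type*} [Fintype ι] [DecidableEq ι] [CommRing R]

theorem trace_pow_mul_commutator (C B : Matrix ι ι R) (p : ℕ) :
    (C ^ p * (C * B - B * C)).trace = 0 := by
  rw [mul_sub, trace_sub, ← mul_assoc, ← pow_succ, ← mul_assoc, trace_mul_comm _ C,
    ← mul_assoc, ← pow_succ', sub_self]

theorem trace_sum_pow_mul_mul_pow (C D : Matrix ι ι R) (m : ℕ) :
    (∑ i ∈ Finset.range m, C ^ (m.pred - i) * D * C ^ i).trace = m * (C ^ (m - 1) * D).trace := by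
  calc _ = ∑ _i ∈ Finset.range m, (C ^ (m - 1) * D).trace := by
        refine (trace_sum _ _).trans (Finset.sum_congr rfl fun i hi => ?_)
        rw [trace_mul_comm, ← mul_assoc, ← pow_add, Nat.pred_eq_sub_one,
          Nat.add_sub_of_le (Nat.le_sub_one_of_lt (Finset.mem_range.mp hi))]
    _ = _ := by rw [Finset.sum_const, Finset.card_range, nsmul_eq_mul]

end Matrix

section MatrixCalculus

variable {𝕜 ι : Type*} [NontriviallyNormedField 𝕜] [CompleteSpace 𝕜] [Fintype ι] [DecidableEq ι]

/- The entrywise sup norm in force does not make matrices a normed ring, so the power rule is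
applied with the operator norm `Matrix.linftyOpNormedRing`: derivatives only see the topology of
the target, and the two norms induce the same topology definitionally. -/

theorem hasDerivAt_trace_pow {f : 𝕜 → Matrix ι ι 𝕜} {f' : Matrix ι ι 𝕜} {t : 𝕜}
    (hf : HasDerivAt f f' t) (m : ℕ) :
    HasDerivAt (fun s => (f s ^ m).trace) (m * (f t ^ (m - 1) * f').trace) t := by
  let _ := Matrix.linftyOpNormedRing (n := ι) (α := 𝕜)
  let _ := Matrix.linftyOpNormedAlgebra (n := ι) (R := 𝕜) (α := 𝕜)
  rw [← Matrix.trace_sum_pow_mul_mul_pow]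
  exact (Matrix.traceLinearMap ι 𝕜 𝕜).toContinuousLinearMap.hasFDerivAt.comp_hasDerivAt t
    (hf.fun_pow' m)

theorem DifferentiableOn.trace_pow {E : Type*} [NormedAddCommGroup E] [NormedSpace 𝕜 E]
    {f : E → Matrix ι ι 𝕜} {s : Set E} (hf : DifferentiableOn 𝕜 f s) (m : ℕ) :
    DifferentiableOn 𝕜 (fun y => (f y ^ m).trace) s := by
  let _ := Matrix.linftyOpNormedRing (n := ι) (α := 𝕜)
  let _ := Matrix.linftyOpNormedAlgebra (n := ι) (R := 𝕜) (α := 𝕜)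
  exact (Matrix.traceLinearMap ι 𝕜 𝕜).toContinuousLinearMap.differentiable.comp_differentiableOn
    (hf.pow m)

end MatrixCalculus

section PartialDerivatives

variable {n : ℕ} {E : Type*} [NormedAddCommGroup E] [NormedSpace ℂ E]

theorem DifferentiableAt.hasDerivAt_pdv {f : (Fin n → ℂ) → E} {x : Fin n → ℂ}
    (hf : DifferentiableAt ℂ f x) (k : Fin n) :
    HasDerivAt (fun t : ℂ => f (Function.update x k t)) (fderiv ℂ f x (Pi.single k 1)) (x k) := by
  have h : HasFDerivAt f (fderiv ℂ f x) (Function.update x k (x k)) := by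
    rw [Function.update_eq_self]
    exact hf.hasFDerivAt
  exact h.comp_hasDerivAt (x k) (hasDerivAt_update x k (x k))

theorem DifferentiableAt.pdv_eq_fderiv {f : (Fin n → ℂ) → E} {x : Fin n → ℂ}
    (hf : DifferentiableAt ℂ f x) (k : Fin n) : pdv k f x = fderiv ℂ f x (Pi.single k 1) :=
  (hf.hasDerivAt_pdv k).deriv

theorem IsOpen.is_const_of_pdv_eq_zero {s : Set (Fin n → ℂ)} {f : (Fin n → ℂ) → E}
    (hs : IsOpen s) (hs' : IsPreconnected s) (hf : DifferentiableOn ℂ f s)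
    (hpdv : ∀ x ∈ s, ∀ k, pdv k f x = 0) {x y : Fin n → ℂ} (hx : x ∈ s) (hy : y ∈ s) :
    f x = f y := by
  refine hs.is_const_of_fderiv_eq_zero hs' hf (fun z hz => ?_) hx hy
  have hfz := hf.differentiableAt (hs.mem_nhds hz)
  refine ContinuousLinearMap.coe_injective ((Pi.basisFun ℂ (Fin n)).ext fun k => ?_)
  simp [← hfz.pdv_eq_fderiv, hpdv z hz k]

theorem pdv_trace_pow {N : ℕ} {f : (Fin n → ℂ) → Matrix (Fin N) (Fin N) ℂ} {x : Fin n → ℂ}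
    (hf : DifferentiableAt ℂ f x) (k : Fin n) (m : ℕ) :
    pdv k (fun y => (f y ^ m).trace) x = m * (f x ^ (m - 1) * pdv k f x).trace := by
  have h := hasDerivAt_trace_pow (hf.hasDerivAt_pdv k) m
  rw [Function.update_eq_self] at h
  rw [pdv, h.deriv, hf.pdv_eq_fderiv]

end PartialDerivatives

theorem exists_pdv_eq_commutator_of_schlesinger {n N : ℕ}
    {A : Fin n → (Fin n → ℂ) → Matrix (Fin N) (Fin N) ℂ} {x : Fin n → ℂ} {j : Fin n}
    (hSch₁ : ∀ k : Fin n, j ≠ k →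
      pdv k (A j) x = (x j - x k)⁻¹ • (A j x * A k x - A k x * A j x))
    (hSch₂ : pdv j (A j) x = -∑ k ∈ Finset.univ \ {j},
        (x j - x k)⁻¹ • (A j x * A k x - A k x * A j x)) (k : Fin n) :
    ∃ B, pdv k (A j) x = A j x * B - B * A j x := by
  by_cases hjk : j = k
  · subst hjk
    refine ⟨-∑ l ∈ Finset.univ \ {j}, (x j - x l)⁻¹ • A l x, ?_⟩
    simp only [hSch₂, mul_neg, neg_mul, Finset.mul_sum, Finset.sum_mul, mul_smul_comm,
      smul_mul_assoc, smul_sub, Finset.sum_sub_distrib]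
    abel
  · exact ⟨(x j - x k)⁻¹ • A k x, by rw [hSch₁ k hjk, mul_smul_comm, smul_mul_assoc, smul_sub]⟩

theorem trace_powers_constant_general {n N m : ℕ}
    (Ω : Set (Fin n → ℂ)) (hΩ : IsOpen Ω) (hconn : IsConnected Ω)
    (A : Fin n → (Fin n → ℂ) → Matrix (Fin N) (Fin N) ℂ)
    (hA : ∀ j, DifferentiableOn ℂ (A j) Ω)
    (hSch₁ : ∀ x ∈ Ω, ∀ j k : Fin n, j ≠ k →
      pdv k (A j) x = (x j - x k)⁻¹ • (A j x * A k x - A k x * A j x))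
    (hSch₂ : ∀ x ∈ Ω, ∀ j : Fin n,
      pdv j (A j) x = -∑ k ∈ Finset.univ \ {j},
        (x j - x k)⁻¹ • (A j x * A k x - A k x * A j x)) :
    ∀ j : Fin n,
      (∀ x ∈ Ω, ∀ k : Fin n, pdv k (fun y => ((A j y) ^ m).trace) x = 0) ∧
      (∀ x ∈ Ω, ∀ y ∈ Ω, ((A j x) ^ m).trace = ((A j y) ^ m).trace) := by
  intro j
  have hpdv : ∀ x ∈ Ω, ∀ k : Fin n, pdv k (fun y => ((A j y) ^ m).trace) x = 0 := by
    intro x hx k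
    obtain ⟨B, hB⟩ :=
      exists_pdv_eq_commutator_of_schlesinger (hSch₁ x hx j) (hSch₂ x hx j) k
    rw [pdv_trace_pow ((hA j).differentiableAt (hΩ.mem_nhds hx)), hB,
      Matrix.trace_pow_mul_commutator, mul_zero]
  exact ⟨hpdv, fun x hx y hy =>
    hΩ.is_const_of_pdv_eq_zero hconn.isPreconnected ((hA j).trace_pow m) hpdv hx hy⟩

/-- Along solutions of the Schlesinger system on a connected open set Ω, each
function `x ↦ tr((A_j(x))^m)` is constant on Ω: all its partial derivatives
vanish identically (the spectral data of the residues is preserved). -/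
theorem trace_powers_constant {n N m : ℕ} (hn : 2 ≤ n) (hN : 1 ≤ N) (hm : 1 ≤ m)
    (Ω : Set (Fin n → ℂ)) (hΩ : IsOpen Ω) (hconn : IsConnected Ω)
    (hdist : ∀ x ∈ Ω, ∀ j k : Fin n, j ≠ k → x j ≠ x k)
    (A : Fin n → (Fin n → ℂ) → Matrix (Fin N) (Fin N) ℂ)
    (hA : ∀ j, DifferentiableOn ℂ (A j) Ω)
    (hSch₁ : ∀ x ∈ Ω, ∀ j k : Fin n, j ≠ k →
      pdv k (A j) x = (x j - x k)⁻¹ • (A j x * A k x - A k x * A j x))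
    (hSch₂ : ∀ x ∈ Ω, ∀ j : Fin n,
      pdv j (A j) x = -∑ k ∈ Finset.univ \ {j},
        (x j - x k)⁻¹ • (A j x * A k x - A k x * A j x)) :
    ∀ j : Fin n,
      (∀ x ∈ Ω, ∀ k : Fin n, pdv k (fun y => ((A j y) ^ m).trace) x = 0) ∧
      (∀ x ∈ Ω, ∀ y ∈ Ω, ((A j x) ^ m).trace = ((A j y) ^ m).trace) :=
  trace_powers_constant_general Ω hΩ hconn A hA hSch₁ hSch₂
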